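/- For every integer n ≥ 2, the infimum defining α_n is attained by a unique vector δ = (δ_1, …, δ_n) of positive reals with δ_1 = 1; moreover this vector satisfies δ_i = α_n · S_{i+1} for all 1 ≤ i ≤ n−1 and δ_n = α_n · S_n (so in particular δ_{n−1} = δ_n), where S_i = δ_1 + ⋯ + δ_i. -/

import Mathlib

open Finset

/-- `S δ i = δ 1 + ⋯ + δ i`. -/
noncomputable def S (δ : ℕ → ℝ) (i : ℕ) : ℝ := ∑ k ∈ Finset.Icc 1 i, δ k

/-- `max {δ 1 / S 2, …, δ (n-1) / S n, δ n / S n}`.  For `i ≤ n - 1` we have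
`min (i+1) n = i+1`, while for `i = n` we get `δ n / S n`. -/
noncomputable def maxRatio (n : ℕ) (δ : ℕ → ℝ) : ℝ :=
  (insert n (Finset.Icc 1 n)).sup' (Finset.insert_nonempty _ _)
    (fun i => δ i / S δ (min (i + 1) n))

/-- `α n` is the infimum over positive vectors `δ` of the above maximum. -/
noncomputable def alpha (n : ℕ) : ℝ :=
  sInf {r : ℝ | ∃ δ : ℕ → ℝ, (∀ i ∈ Finset.Icc 1 n, 0 < δ i) ∧ r = maxRatio n δ}

/-!
Write `x = S δ` and `r = maxRatio n δ`, so that `x 0 = 0` and the constraints read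
`x (m + 1) - x m ≤ r * x (m + 2)` for `m + 2 ≤ n` and `x n - x (n - 1) ≤ r * x n`.
With `θ = π / (n + 2)`, the sequence `s k = (2 cos θ) ^ k sin (k θ)` turns all of them into
equalities for `r = a := 1 / (4 cos² θ)`; it satisfies `s 0 = 0` and `s (n + 1) = s n`.
Compare `x` with `s` through the Casoratian `W m = s m * x (m + 1) - s (m + 1) * x m`.
If `r ≤ a`, the constraints make `a ^ m * W m` nondecreasing for `m ≤ n - 1`, starting from
`W 0 = 0`, while the last constraint gives `W (n - 1) ≤ (r - a) * s n * x n`. Hence `r = a`,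
and then every `W m` vanishes, which forces `x` to be proportional to `s`.
-/

section Casoratian

variable {a : ℝ} {s x : ℕ → ℝ}

def casoratian (s x : ℕ → ℝ) (m : ℕ) : ℝ := s m * x (m + 1) - s (m + 1) * x m

lemma casoratian_le_mul_succ {m : ℕ} (hs : s (m + 1) - s m = a * s (m + 2))
    (hs₁ : 0 ≤ s (m + 1)) (hx : x (m + 1) - x m ≤ a * x (m + 2)) :
    casoratian s x m ≤ a * casoratian s x (m + 1) := by
  unfold casoratian
  linear_combination s (m + 1) * hx - x (m + 1) * hs

lemma monotoneOn_pow_mul_of_le_mul_succ {f : ℕ → ℝ} {N : ℕ} (ha : 0 ≤ a)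
    (h : ∀ m < N, f m ≤ a * f (m + 1)) :
    MonotoneOn (fun m => a ^ m * f m) (Set.Iic N) :=
  monotoneOn_of_le_add_one Set.ordConnected_Iic fun m _ _ hm => by
    rw [pow_succ, mul_assoc]
    exact mul_le_mul_of_nonneg_left (h m (Set.mem_Iic.1 hm)) (pow_nonneg ha m)

end Casoratian

/-- `s` plays the role of `S δ` for a vector `δ` with `δ 1 = 1` all of whose ratios in
`maxRatio n δ` equal `a`. -/
structure IsExtremalPartialSums (n : ℕ) (a : ℝ) (s : ℕ → ℝ) : Prop where
  zero : s 0 = 0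
  one : s 1 = 1
  succ_sub : ∀ m, s (m + 1) - s m = a * s (m + 2)
  pos : ∀ k, 1 ≤ k → k ≤ n + 1 → 0 < s k
  top : s (n + 1) = s n

namespace IsExtremalPartialSums

variable {n : ℕ} {a r : ℝ} {s x : ℕ → ℝ} (hS : IsExtremalPartialSums n a s)
include hS

lemma ratio_pos (hn : 1 ≤ n) : 0 < a := by
  have h := hS.succ_sub 0
  rw [hS.zero, hS.one, sub_zero] at h
  exact pos_of_mul_pos_left (h ▸ one_pos) (hS.pos 2 (by omega) (by omega)).le

lemma casoratian_pred_le (hn : 1 ≤ n) (hx : x n - x (n - 1) ≤ r * x n) :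
    casoratian s x (n - 1) ≤ (r - a) * (s n * x n) := by
  obtain ⟨N, rfl⟩ : ∃ N, n = N + 1 := ⟨n - 1, by omega⟩
  have hs := hS.succ_sub N
  rw [hS.top] at hs
  have hsn := (hS.pos (N + 1) hn (by omega)).le
  simp only [casoratian, Nat.add_sub_cancel] at hx ⊢
  linear_combination s (N + 1) * hx - x (N + 1) * hs

theorem eq_and_casoratian_eq_zero (hn : 1 ≤ n) (hx₀ : x 0 = 0) (hxn : 0 < x n)
    (hx : ∀ m, m + 1 < n → x (m + 1) - x m ≤ a * x (m + 2))
    (hx_top : x n - x (n - 1) ≤ r * x n) (hra : r ≤ a) :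
    r = a ∧ ∀ m < n, casoratian s x m = 0 := by
  have ha := hS.ratio_pos hn
  have hmono : MonotoneOn (fun m => a ^ m * casoratian s x m) (Set.Iic (n - 1)) :=
    monotoneOn_pow_mul_of_le_mul_succ ha.le fun m hm =>
      casoratian_le_mul_succ (hS.succ_sub m) (hS.pos (m + 1) (by omega) (by omega)).le
        (hx m (by omega))
  have hW₀ : casoratian s x 0 = 0 := by simp [casoratian, hS.zero, hx₀]
  have hW_nonneg : ∀ m ≤ n - 1, 0 ≤ a ^ m * casoratian s x m := fun m hm => by
    simpa [hW₀] using hmono (Set.mem_Iic.2 (Nat.zero_le _)) (Set.mem_Iic.2 hm) (Nat.zero_le m)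
  have hW_top := hS.casoratian_pred_le hn hx_top
  have hsx : 0 < s n * x n := mul_pos (hS.pos n hn (by omega)) hxn
  have hW_top_nonneg : 0 ≤ casoratian s x (n - 1) :=
    nonneg_of_mul_nonneg_right (hW_nonneg (n - 1) le_rfl) (pow_pos ha _)
  obtain rfl : r = a := le_antisymm hra (by nlinarith)
  refine ⟨rfl, fun m hm => ?_⟩
  have hle := hmono (Set.mem_Iic.2 (by omega : m ≤ n - 1)) (Set.mem_Iic.2 le_rfl)
    (by omega : m ≤ n - 1)
  have hW_top_zero : casoratian s x (n - 1) = 0 := by linarith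
  simp only [hW_top_zero, mul_zero] at hle
  exact (mul_eq_zero.1 (le_antisymm hle (hW_nonneg m (by omega)))).resolve_left
    (pow_ne_zero _ ha.ne')

lemma eq_of_casoratian_eq_zero (hx₁ : x 1 = 1) (hW : ∀ m < n, casoratian s x m = 0) :
    ∀ k, 1 ≤ k → k ≤ n → x k = s k := by
  intro k hk
  induction k, hk using Nat.le_induction with
  | base => exact fun _ => hx₁.trans hS.one.symm
  | succ k hk ih =>
    intro hkn
    have h := hW k (by omega)
    rw [casoratian, ih (by omega)] at h
    exact mul_left_cancel₀ (hS.pos k hk (by omega)).ne' (by linarith)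

end IsExtremalPartialSums

section PartialSums

variable {n : ℕ} {δ : ℕ → ℝ}

lemma S_zero (δ : ℕ → ℝ) : S δ 0 = 0 := by simp [S]

lemma S_succ (δ : ℕ → ℝ) (m : ℕ) : S δ (m + 1) = S δ m + δ (m + 1) :=
  Finset.sum_Icc_succ_top (by omega) _

lemma S_pos (hpos : ∀ i ∈ Icc 1 n, 0 < δ i) {k : ℕ} (hk : 1 ≤ k) (hkn : k ≤ n) :
    0 < S δ k :=
  Finset.sum_pos (fun i hi => hpos i (by simp only [mem_Icc] at hi ⊢; omega))
    ⟨1, by simp only [mem_Icc]; omega⟩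

lemma S_sub_pred (x : ℕ → ℝ) (hx₀ : x 0 = 0) (m : ℕ) :
    S (fun k => x k - x (k - 1)) m = x m := by
  induction m with
  | zero => rw [S_zero, hx₀]
  | succ m ih => rw [S_succ, ih, Nat.add_sub_cancel, add_sub_cancel]

lemma S_succ_sub_le_maxRatio_mul (hpos : ∀ i ∈ Icc 1 n, 0 < δ i) {m : ℕ} (hm : m + 1 < n) :
    S δ (m + 1) - S δ m ≤ maxRatio n δ * S δ (m + 2) := by
  rw [sub_eq_of_eq_add' (S_succ δ m), ← div_le_iff₀ (S_pos hpos (by omega) (by omega))]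
  have h := Finset.le_sup' (fun i => δ i / S δ (min (i + 1) n))
    (mem_insert_of_mem (mem_Icc.2 ⟨by omega, hm.le⟩) : m + 1 ∈ insert n (Icc 1 n))
  rwa [min_eq_left (by omega : m + 1 + 1 ≤ n)] at h

lemma S_sub_pred_le_maxRatio_mul (hpos : ∀ i ∈ Icc 1 n, 0 < δ i) (hn : 1 ≤ n) :
    S δ n - S δ (n - 1) ≤ maxRatio n δ * S δ n := by
  obtain ⟨N, rfl⟩ : ∃ N, n = N + 1 := ⟨n - 1, by omega⟩
  rw [Nat.add_sub_cancel, sub_eq_of_eq_add' (S_succ δ N), ← div_le_iff₀ (S_pos hpos hn le_rfl)]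
  have h := Finset.le_sup' (fun i => δ i / S δ (min (i + 1) (N + 1)))
    (mem_insert_self (N + 1) (Icc 1 (N + 1)))
  rwa [min_eq_right (by omega : N + 1 ≤ N + 1 + 1)] at h

lemma maxRatio_eq_of_forall {c : ℝ}
    (h : ∀ i ∈ insert n (Icc 1 n), δ i / S δ (min (i + 1) n) = c) : maxRatio n δ = c :=
  (Finset.sup'_congr _ rfl h).trans (Finset.sup'_const _ c)

end PartialSums

namespace IsExtremalPartialSums

variable {n : ℕ} {a : ℝ} {s : ℕ → ℝ} (hS : IsExtremalPartialSums n a s)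
include hS

lemma S_sub_pred_eq : S (fun k => s k - s (k - 1)) = s := funext (S_sub_pred s hS.zero)

lemma sub_pred_eq {k : ℕ} (hk : 1 ≤ k) : s k - s (k - 1) = a * s (k + 1) := by
  obtain ⟨m, rfl⟩ : ∃ m, k = m + 1 := ⟨k - 1, by omega⟩
  exact hS.succ_sub m

lemma sub_pred_pos (hn : 1 ≤ n) : ∀ i ∈ Icc 1 n, 0 < s i - s (i - 1) := fun i hi => by
  obtain ⟨hi₁, hin⟩ := mem_Icc.1 hi
  rw [hS.sub_pred_eq hi₁]
  exact mul_pos (hS.ratio_pos hn) (hS.pos (i + 1) (by omega) (by omega))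

lemma maxRatio_sub_pred (hn : 1 ≤ n) : maxRatio n (fun k => s k - s (k - 1)) = a := by
  refine maxRatio_eq_of_forall fun i hi => ?_
  obtain ⟨hi₁, hi_n⟩ : 1 ≤ i ∧ i ≤ n := by
    rcases mem_insert.1 hi with rfl | hi
    exacts [⟨hn, le_rfl⟩, mem_Icc.1 hi]
  have h_min : s (i + 1) = s (min (i + 1) n) := by
    rcases hi_n.lt_or_eq with hlt | rfl
    · rw [min_eq_left hlt]
    · rw [min_eq_right (Nat.le_succ i), hS.top]
  have hpos := hS.pos (min (i + 1) n) (by omega) (by omega)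
  rw [hS.S_sub_pred_eq, hS.sub_pred_eq hi₁, h_min, mul_div_assoc, div_self hpos.ne', mul_one]

lemma le_maxRatio (hn : 1 ≤ n) {δ : ℕ → ℝ} (hpos : ∀ i ∈ Icc 1 n, 0 < δ i) :
    a ≤ maxRatio n δ := by
  by_contra! h
  refine h.ne (hS.eq_and_casoratian_eq_zero hn (S_zero δ) (S_pos hpos hn le_rfl)
    (fun m hm => ?_) (S_sub_pred_le_maxRatio_mul hpos hn) h.le).1
  exact (S_succ_sub_le_maxRatio_mul hpos hm).trans
    (mul_le_mul_of_nonneg_right h.le (S_pos hpos (by omega) (by omega)).le)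

lemma alpha_eq (hn : 1 ≤ n) : alpha n = a :=
  IsLeast.csInf_eq ⟨⟨_, hS.sub_pred_pos hn, (hS.maxRatio_sub_pred hn).symm⟩,
    by rintro r ⟨δ, hδ, rfl⟩; exact hS.le_maxRatio hn hδ⟩

lemma eq_sub_pred_of_maxRatio_eq (hn : 1 ≤ n) {δ : ℕ → ℝ} (hpos : ∀ i ∈ Icc 1 n, 0 < δ i)
    (h₁ : δ 1 = 1) (hmax : maxRatio n δ = a) : ∀ i ∈ Icc 1 n, δ i = s i - s (i - 1) := by
  obtain ⟨-, hW⟩ := hS.eq_and_casoratian_eq_zero hn (S_zero δ) (S_pos hpos hn le_rfl)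
    (fun m hm => hmax ▸ S_succ_sub_le_maxRatio_mul hpos hm)
    (hmax ▸ S_sub_pred_le_maxRatio_mul hpos hn) le_rfl
  have hS_eq := hS.eq_of_casoratian_eq_zero (by rw [S_succ, S_zero, zero_add, h₁]) hW
  have hS_eq' : ∀ k ≤ n, S δ k = s k := fun k hk => by
    rcases Nat.eq_zero_or_pos k with rfl | hk₀
    · rw [S_zero, hS.zero]
    · exact hS_eq k hk₀ hk
  intro i hi
  obtain ⟨hi₁, hin⟩ := mem_Icc.1 hi
  obtain ⟨m, rfl⟩ : ∃ m, i = m + 1 := ⟨i - 1, by omega⟩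
  rw [Nat.add_sub_cancel, ← hS_eq' (m + 1) hin, ← hS_eq' m (by omega), S_succ]
  ring

end IsExtremalPartialSums

section Chebyshev

open Real

variable {θ : ℝ}

noncomputable def chebSeq (θ : ℝ) (k : ℕ) : ℝ := (2 * cos θ) ^ k * sin (k * θ)

lemma chebSeq_zero (θ : ℝ) : chebSeq θ 0 = 0 := by simp [chebSeq]

lemma chebSeq_succ_sub (hθ : cos θ ≠ 0) (m : ℕ) :
    chebSeq θ (m + 1) - chebSeq θ m = (4 * cos θ ^ 2)⁻¹ * chebSeq θ (m + 2) := by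
  have h₂ : ((m + 2 : ℕ) : ℝ) * θ = ((m + 1 : ℕ) : ℝ) * θ + θ := by push_cast; ring
  have h₀ : (m : ℝ) * θ = ((m + 1 : ℕ) : ℝ) * θ - θ := by push_cast; ring
  simp only [chebSeq]
  rw [h₂, h₀, sin_add, sin_sub]
  field_simp
  ring

lemma chebSeq_pos (hθ : 0 < θ) (hc : 0 < cos θ) {k : ℕ} (hk : 1 ≤ k) (hkθ : k * θ < π) :
    0 < chebSeq θ k := by
  have hk' : (1 : ℝ) ≤ k := by exact_mod_cast hk
  have hsin : 0 < sin (k * θ) := sin_pos_of_pos_of_lt_pi (by nlinarith) hkθ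
  unfold chebSeq
  positivity

lemma chebSeq_succ_eq_self {n : ℕ} (hθ : (n + 2) * θ = π) :
    chebSeq θ (n + 1) = chebSeq θ n := by
  have h₁ : ((n + 1 : ℕ) : ℝ) * θ = π - θ := by push_cast; linarith
  have h₀ : (n : ℝ) * θ = π - 2 * θ := by linarith
  simp only [chebSeq]
  rw [h₁, h₀, sin_pi_sub, sin_pi_sub, sin_two_mul]
  ring

theorem isExtremalPartialSums_chebSeq {n : ℕ} (hn : 1 ≤ n) :
    IsExtremalPartialSums n (4 * cos (π / (n + 2)) ^ 2)⁻¹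
      (fun k => chebSeq (π / (n + 2)) k / chebSeq (π / (n + 2)) 1) := by
  set θ := π / (n + 2) with hθ_def
  have hθ : 0 < θ := by positivity
  have hθπ : (n + 2) * θ = π := by rw [hθ_def]; field_simp
  have hn' : (1 : ℝ) ≤ n := by exact_mod_cast hn
  have hc : 0 < cos θ := cos_pos_of_mem_Ioo ⟨by linarith [pi_pos], by nlinarith [pi_pos]⟩
  have hpos : ∀ k, 1 ≤ k → k ≤ n + 1 → 0 < chebSeq θ k := fun k hk hkn =>
    chebSeq_pos hθ hc hk (by
      have : (k : ℝ) ≤ n + 1 := by exact_mod_cast hkn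
      nlinarith)
  have h₁ := hpos 1 le_rfl (by omega)
  refine ⟨by simp [chebSeq_zero], div_self h₁.ne', fun m => ?_, fun k hk hkn => ?_, ?_⟩
  · rw [← sub_div, chebSeq_succ_sub hc.ne' m, mul_div_assoc]
  · exact div_pos (hpos k hk hkn) h₁
  · simp only [chebSeq_succ_eq_self hθπ]

end Chebyshev

theorem alpha_attained_unique (n : ℕ) (hn : 2 ≤ n) :
    ∃ δ : ℕ → ℝ,
      ((∀ i ∈ Finset.Icc 1 n, 0 < δ i) ∧ δ 1 = 1 ∧ maxRatio n δ = alpha n) ∧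
      (∀ δ' : ℕ → ℝ,
        ((∀ i ∈ Finset.Icc 1 n, 0 < δ' i) ∧ δ' 1 = 1 ∧ maxRatio n δ' = alpha n) →
        ∀ i ∈ Finset.Icc 1 n, δ' i = δ i) ∧
      (∀ i ∈ Finset.Icc 1 (n - 1), δ i = alpha n * S δ (i + 1)) ∧
      δ n = alpha n * S δ n := by
  have hn₁ : 1 ≤ n := by omega
  obtain ⟨a, s, hS⟩ : ∃ a s, IsExtremalPartialSums n a s :=
    ⟨_, _, isExtremalPartialSums_chebSeq hn₁⟩
  rw [hS.alpha_eq hn₁]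
  refine ⟨fun k => s k - s (k - 1),
    ⟨hS.sub_pred_pos hn₁, by simp [hS.one, hS.zero], hS.maxRatio_sub_pred hn₁⟩,
    fun δ ⟨hpos, h₁, hmax⟩ => hS.eq_sub_pred_of_maxRatio_eq hn₁ hpos h₁ hmax,
    fun i hi => ?_, ?_⟩
  · rw [hS.S_sub_pred_eq]
    exact hS.sub_pred_eq (mem_Icc.1 hi).1
  · rw [hS.S_sub_pred_eq, ← hS.top]
    exact hS.sub_pred_eq hn₁
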